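/- arXiv:2512.09999 — 2 statements merged into one kernel-verified Lean document; each statement's English description precedes it below -/
import Mathlib

section
/- Let N ≥ 1, d = 2^N, S = σ_z^{⊗N}, and let 𝒰_{Z2}(2^N) be the set of d×d unitaries F with FS = SF or FS = −SF. If a d×d complex matrix A satisfies AF = FA for every F ∈ 𝒰_{Z2}(2^N), then A = λ·I for some complex scalar λ; that is, the commutant of 𝒰_{Z2}(2^N) consists only of scalar multiples of the identity. -/
open Matrix
open scoped Kronecker

noncomputable section

/-- Index type of the `N`-qubit Hilbert space `ℂ^(2^N)`. -/
abbrev QIdx (N : ℕ) := Fin N → Fin 2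

/-- `σ_z^{⊗N}`: the `N`-fold Kronecker power of `diag(1, -1)`. -/
def Smat (N : ℕ) : Matrix (QIdx N) (QIdx N) ℂ :=
  Matrix.diagonal fun x => ∏ i, (-1 : ℂ) ^ (x i : ℕ)

/-- `𝒰_{Z2}(2^N)`: the set of unitaries commuting or anticommuting with `σ_z^{⊗N}`. -/
def Z2Set (N : ℕ) : Set (Matrix.unitaryGroup (QIdx N) ℂ) :=
  {F | (F : Matrix (QIdx N) (QIdx N) ℂ) * Smat N = Smat N * (F : Matrix (QIdx N) (QIdx N) ℂ) ∨
       (F : Matrix (QIdx N) (QIdx N) ℂ) * Smat N = -(Smat N * (F : Matrix (QIdx N) (QIdx N) ℂ))}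

/-! The group `𝒰_{Z2}` contains the diagonal sign flips, which force a matrix commuting with
it to be diagonal, and the permutation matrices of the translations `x ↦ x + v` of
`(ℤ/2)^N`, which act transitively on the basis and so force the diagonal to be constant.
A translation only multiplies `σ_z^{⊗N}` by the character value `(-1)^{|v|} = ±1`. -/

namespace Matrix

variable {n R : Type*} [Fintype n] [DecidableEq n]

theorem diagonal_mem_unitaryGroup [CommRing R] [StarRing R] {d : n → R}
    (hd : ∀ i, star (d i) * d i = 1) : diagonal d ∈ unitaryGroup n R := by
  rw [mem_unitaryGroup_iff', star_eq_conjTranspose, diagonal_conjTranspose,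
    diagonal_mul_diagonal, ← diagonal_one]
  exact congrArg diagonal (funext hd)

theorem permMatrix_mem_unitaryGroup [CommRing R] [StarRing R] (σ : Equiv.Perm n) :
    σ.permMatrix R ∈ unitaryGroup n R := by
  rw [mem_unitaryGroup_iff', star_eq_conjTranspose, conjTranspose_permMatrix,
    ← permMatrix_mul, mul_inv_cancel, permMatrix_one]

theorem apply_eq_zero_of_mul_diagonal_eq [CommRing R] [NoZeroDivisors R] {A : Matrix n n R}
    {d : n → R} (h : A * diagonal d = diagonal d * A) {i j : n} (hij : d i ≠ d j) :
    A i j = 0 := by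
  have hij' : A i j * d j = d i * A i j := by
    simpa only [mul_diagonal, diagonal_mul] using congrFun (congrFun h i) j
  have : (d j - d i) * A i j = 0 := by linear_combination hij'
  exact (mul_eq_zero.mp this).resolve_left (sub_ne_zero.mpr hij.symm)

theorem apply_apply_eq_of_mul_permMatrix_eq [CommRing R] {A : Matrix n n R} {σ : Equiv.Perm n}
    (h : A * σ.permMatrix R = σ.permMatrix R * A) (i j : n) : A (σ i) (σ j) = A i j := by
  have := congrFun (congrFun h i) (σ j)
  rw [PEquiv.mul_toMatrix_toPEquiv, PEquiv.toMatrix_toPEquiv_mul] at this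
  simpa using this.symm

theorem permMatrix_mul_diagonal_eq_smul [CommRing R] {σ : Equiv.Perm n} {d : n → R} {c : R}
    (hd : ∀ i, d (σ i) = c * d i) :
    σ.permMatrix R * diagonal d = c • (diagonal d * σ.permMatrix R) := by
  ext i j
  rw [PEquiv.mul_toMatrix_toPEquiv, PEquiv.toMatrix_toPEquiv_mul]
  by_cases hij : σ i = j
  · subst hij
    simp [hd]
  · have : i ≠ σ.symm j := fun h => hij (by simp [h])
    simp [diagonal_apply_ne _ hij, diagonal_apply_ne _ this]

end Matrix

section ParityCharacter

variable {ι R : Type*} [Fintype ι] [CommRing R]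

theorem neg_one_pow_val_add (a b : Fin 2) :
    (-1 : R) ^ ((a + b : Fin 2) : ℕ) = (-1) ^ (a : ℕ) * (-1) ^ (b : ℕ) := by
  rw [Fin.val_add, ← neg_one_pow_eq_pow_mod_two, pow_add]

theorem prod_neg_one_pow_val_add (x v : ι → Fin 2) :
    ∏ i, (-1 : R) ^ ((x + v) i : ℕ) = (∏ i, (-1 : R) ^ (x i : ℕ)) * ∏ i, (-1) ^ (v i : ℕ) := by
  simp only [Pi.add_apply, neg_one_pow_val_add, Finset.prod_mul_distrib]

theorem prod_neg_one_pow_val_eq_or (v : ι → Fin 2) :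
    ∏ i, (-1 : R) ^ (v i : ℕ) = 1 ∨ ∏ i, (-1 : R) ^ (v i : ℕ) = -1 := by
  rw [Finset.prod_pow_eq_pow_sum]
  exact neg_one_pow_eq_or R _

end ParityCharacter

namespace Z2Set

variable {N : ℕ}

theorem diagonal_mem {d : QIdx N → ℂ} (hd : diagonal d ∈ unitaryGroup (QIdx N) ℂ) :
    (⟨diagonal d, hd⟩ : unitaryGroup (QIdx N) ℂ) ∈ Z2Set N := by
  left
  simp only [Smat, diagonal_mul_diagonal, mul_comm]

theorem permMatrix_addRight_mem (v : QIdx N) :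
    (⟨(Equiv.addRight v).permMatrix ℂ, permMatrix_mem_unitaryGroup _⟩ :
      unitaryGroup (QIdx N) ℂ) ∈ Z2Set N := by
  have hP := permMatrix_mul_diagonal_eq_smul (σ := Equiv.addRight v)
    (d := fun x : QIdx N => ∏ i, (-1 : ℂ) ^ (x i : ℕ))
    (fun x => (prod_neg_one_pow_val_add x v).trans (mul_comm _ _))
  rcases prod_neg_one_pow_val_eq_or (R := ℂ) v with hc | hc
  · left
    simpa [Smat, hc] using hP
  · right
    simpa [Smat, hc] using hP

end Z2Set

theorem Z2Set_commutant_trivial_general (N : ℕ)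
    (A : Matrix (QIdx N) (QIdx N) ℂ)
    (hA : ∀ F ∈ Z2Set N,
      A * (F : Matrix (QIdx N) (QIdx N) ℂ) = (F : Matrix (QIdx N) (QIdx N) ℂ) * A) :
    ∃ c : ℂ, A = c • (1 : Matrix (QIdx N) (QIdx N) ℂ) := by
  have hoff : ∀ x z, x ≠ z → A x z = 0 := fun x z hxz => by
    let d : QIdx N → ℂ := fun w => if w = z then -1 else 1
    have hd : diagonal d ∈ unitaryGroup (QIdx N) ℂ :=
      diagonal_mem_unitaryGroup fun w => by by_cases hw : w = z <;> simp [d, hw]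
    have hdz : d x ≠ d z := by
      simp only [d, if_neg hxz, if_pos rfl]
      norm_num
    have hcomm := hA _ (Z2Set.diagonal_mem hd)
    exact apply_eq_zero_of_mul_diagonal_eq hcomm hdz
  have hdiag : ∀ x, A x x = A 0 0 := fun x => by
    simpa using apply_apply_eq_of_mul_permMatrix_eq (hA _ (Z2Set.permMatrix_addRight_mem x)) 0 0
  refine ⟨A 0 0, Matrix.ext fun x z => ?_⟩
  by_cases hxz : x = z
  · subst hxz
    simp [hdiag]
  · simp [hoff x z hxz, hxz]

/-- The commutant of `𝒰_{Z2}(2^N)` is trivial: any matrix `A`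
commuting with every element of `𝒰_{Z2}(2^N)` is a scalar multiple of the identity. -/
theorem Z2Set_commutant_trivial (N : ℕ) (hN : 1 ≤ N)
    (A : Matrix (QIdx N) (QIdx N) ℂ)
    (hA : ∀ F ∈ Z2Set N,
      A * (F : Matrix (QIdx N) (QIdx N) ℂ) = (F : Matrix (QIdx N) (QIdx N) ℂ) * A) :
    ∃ c : ℂ, A = c • (1 : Matrix (QIdx N) (QIdx N) ℂ) :=
  Z2Set_commutant_trivial_general N A hA
end
end

section
/- Let N ≥ 1, d = 2^N, S = σ_z^{⊗N}, Z_0 = (I+S)/2, Z_1 = (I−S)/2, and Π^{(2)} = (I + SWAP)/2 on C^d ⊗ C^d. Then Tr((Z_0⊗Z_0)Π^{(2)}) = Tr((Z_1⊗Z_1)Π^{(2)}) = 2^{N−1}(2^{N−1}+1)/2, and consequently 1 − [Tr((Z_0⊗Z_0)Π^{(2)}) + Tr((Z_1⊗Z_1)Π^{(2)})] / Tr(Π^{(2)}) = 2^N/(2(2^N + 1)). -/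
open Matrix
open scoped Kronecker

noncomputable section

/-- `Z_0 = (I + S)/2` and `Z_1 = (I - S)/2`. -/
def Zproj (N : ℕ) (s : Fin 2) : Matrix (QIdx N) (QIdx N) ℂ :=
  (2 : ℂ)⁻¹ • (1 + (-1 : ℂ) ^ (s : ℕ) • Smat N)

/-- The flip (SWAP) operator on `ℂ^d ⊗ ℂ^d`. -/
def swapMat (ι : Type*) [DecidableEq ι] : Matrix (ι × ι) (ι × ι) ℂ :=
  fun p q => if p.1 = q.2 ∧ p.2 = q.1 then 1 else 0

/-- `Π^{(2)} = (I + SWAP)/2`. -/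
def Pi2 (N : ℕ) : Matrix (QIdx N × QIdx N) (QIdx N × QIdx N) ℂ :=
  (2 : ℂ)⁻¹ • (1 + swapMat (QIdx N))

/-!
`Z_s` is an idempotent of trace `2^{N-1}`, since `S² = 1` and `Tr S = (1 + (-1))^N = 0`.
For any matrices `Tr((A ⊗ B) SWAP) = Tr(AB)`, so for an idempotent `P` of trace `t` we get
`Tr((P ⊗ P) Π^{(2)}) = t(t + 1)/2`; taking `P = I` gives `Tr Π^{(2)}` with `t = 2^N`.
The last identity is then arithmetic in `t = 2^{N-1}`.
-/

theorem trace_kronecker_mul_swapMat {ι : Type*} [Fintype ι] [DecidableEq ι]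
    (A B : Matrix ι ι ℂ) : trace ((A ⊗ₖ B) * swapMat ι) = trace (A * B) := by
  simp [trace, mul_apply, swapMat, Fintype.sum_prod_type, ite_and]

theorem trace_kronecker_mul_Pi2 {N : ℕ} {P : Matrix (QIdx N) (QIdx N) ℂ}
    (hP : IsIdempotentElem P) :
    trace ((P ⊗ₖ P) * Pi2 N) = trace P * (trace P + 1) / 2 := by
  rw [Pi2, mul_smul_comm, mul_add, mul_one, trace_smul, trace_add, trace_kronecker,
    trace_kronecker_mul_swapMat, hP.eq]
  field_simp
  ring

theorem trace_Pi2 (N : ℕ) : trace (Pi2 N) = (2 : ℂ) ^ N * ((2 : ℂ) ^ N + 1) / 2 := by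
  simpa [one_kronecker_one, trace_one, Fintype.card_fun] using
    trace_kronecker_mul_Pi2 (N := N) IsIdempotentElem.one

theorem Smat_mul_self (N : ℕ) : Smat N * Smat N = 1 := by
  rw [Smat, diagonal_mul_diagonal, ← diagonal_one]
  congr 1
  ext x
  rw [← Finset.prod_mul_distrib]
  exact Finset.prod_eq_one fun i _ => by rw [← pow_add, ← two_mul, pow_mul, neg_one_sq, one_pow]

theorem trace_Smat {N : ℕ} (hN : N ≠ 0) : trace (Smat N) = 0 := by
  rw [Smat, trace_diagonal, ← Fintype.sum_pow (f := fun j : Fin 2 => (-1 : ℂ) ^ (j : ℕ)),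
    Fin.sum_univ_two]
  simp [zero_pow hN]

theorem isIdempotentElem_Zproj (N : ℕ) (s : Fin 2) : IsIdempotentElem (Zproj N s) := by
  have hsign : (-1 : ℂ) ^ (s : ℕ) * (-1) ^ (s : ℕ) = 1 := by
    rw [← pow_add, ← two_mul, pow_mul, neg_one_sq, one_pow]
  simp only [IsIdempotentElem, Zproj, smul_mul_smul_comm, add_mul, mul_add, one_mul, mul_one,
    Smat_mul_self, hsign]
  module

theorem trace_Zproj {N : ℕ} (hN : N ≠ 0) (s : Fin 2) :
    trace (Zproj N s) = (2 : ℂ) ^ (N - 1) := by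
  rw [Zproj, trace_smul, trace_add, trace_smul, trace_Smat hN, smul_zero, add_zero, trace_one,
    Fintype.card_fun, Fintype.card_fin, Fintype.card_fin, Nat.cast_pow, Nat.cast_ofNat,
    ← pow_sub_one_mul hN, smul_eq_mul]
  ring

/-- **Statement 5.** `Tr((Z_0⊗Z_0)Π^{(2)}) = Tr((Z_1⊗Z_1)Π^{(2)}) = 2^{N−1}(2^{N−1}+1)/2`,
and consequently the Haar-averaged Z2-asymmetry generating power is
`1 − [Tr((Z_0⊗Z_0)Π^{(2)}) + Tr((Z_1⊗Z_1)Π^{(2)})]/Tr(Π^{(2)}) = 2^N/(2(2^N+1))`. -/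
theorem Z2_trace_constants (N : ℕ) (hN : 1 ≤ N) :
    Matrix.trace ((Zproj N 0 ⊗ₖ Zproj N 0) * Pi2 N) =
      (2 : ℂ) ^ (N - 1) * ((2 : ℂ) ^ (N - 1) + 1) / 2 ∧
    Matrix.trace ((Zproj N 1 ⊗ₖ Zproj N 1) * Pi2 N) =
      (2 : ℂ) ^ (N - 1) * ((2 : ℂ) ^ (N - 1) + 1) / 2 ∧
    1 - (Matrix.trace ((Zproj N 0 ⊗ₖ Zproj N 0) * Pi2 N) +
          Matrix.trace ((Zproj N 1 ⊗ₖ Zproj N 1) * Pi2 N)) / Matrix.trace (Pi2 N) =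
      (2 : ℂ) ^ N / (2 * ((2 : ℂ) ^ N + 1)) := by
  have hN0 : N ≠ 0 := Nat.one_le_iff_ne_zero.mp hN
  have hZ (s : Fin 2) : trace ((Zproj N s ⊗ₖ Zproj N s) * Pi2 N) =
      (2 : ℂ) ^ (N - 1) * ((2 : ℂ) ^ (N - 1) + 1) / 2 := by
    rw [trace_kronecker_mul_Pi2 (isIdempotentElem_Zproj N s), trace_Zproj hN0]
  refine ⟨hZ 0, hZ 1, ?_⟩
  rw [hZ 0, hZ 1, trace_Pi2, ← pow_sub_one_mul hN0]
  have ht : (2 : ℂ) ^ (N - 1) ≠ 0 := pow_ne_zero _ two_ne_zero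
  have ht' : (2 : ℂ) ^ (N - 1) * 2 + 1 ≠ 0 := by
    exact_mod_cast Nat.succ_ne_zero (2 ^ (N - 1) * 2)
  field_simp
  ring
end
end
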